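/- arXiv:1305.3099 — 4 statements merged into one kernel-verified Lean document; each statement's English description precedes it below -/
import Mathlib

section
/- Fix x₀ ∈ I, let φ(x) = ∫_{x₀}^x q_el(r) dr and let Γ(x) be the rotation matrix with rows (cos φ(x), −sin φ(x)) and (sin φ(x), cos φ(x)). Then u is a solution of τu = zu if and only if v = Γ⁻¹u is a solution of τ̃v = zv, where τ̃ is the Dirac differential expression with electrostatic potential q̃_el = 0, anomalous magnetic moment q̃_am = q_am cos(2φ) − (m+q_sc) sin(2φ), and mass-plus-scalar term m̃+q̃_sc = (m+q_sc) cos(2φ) + q_am sin(2φ). -/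
/-
Write `J = (1/i)σ₂` and `Γ(θ) = exp(θJ)`. Since `Γ` commutes with `J`, for `u = Γ(θ)v` one has
`J u' = Γ(θ)(J v' - θ' v)`, so the gauge rotation trades the electrostatic potential for
`θ' = q_el`, while conjugating `q_am σ₁ + (m + q_sc)σ₃` by `Γ(θ)` rotates it by the angle `2θ`.
Rotating back by `-θ` gives the converse. Analytically, a solution is a function that is absolutely
continuous on compact subintervals with a prescribed a.e. derivative; by the fundamental theorem of
calculus for absolutely continuous functions such primitives are closed under sums, products and
composition with Lipschitz `C¹` maps, which is all the calculus the rotation needs.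
-/

open MeasureTheory Set Filter Topology Complex Asymptotics

noncomputable section

/-- `q` is locally integrable on the interval `(a, b)`. -/
def LocInt (a b : ℝ) (q : ℝ → ℝ) : Prop :=
  ∀ x ∈ Set.Ioo a b, ∀ y ∈ Set.Ioo a b, IntervalIntegrable q MeasureTheory.volume x y

/-- The Wronskian `W_x(f,g) = f₁(x)g₂(x) - f₂(x)g₁(x)`. -/
def Wr (f g : ℝ → ℂ × ℂ) (x : ℝ) : ℂ :=
  (f x).1 * (g x).2 - (f x).2 * (g x).1

/-- `g = τ f` on `(a,b)` in the locally absolutely continuous sense, where `τ` is the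
one-dimensional Dirac differential expression `τ = (1/i) σ₂ d/dx + Q(x)` with potential
matrix entries `Q11 Q12 Q21 Q22`. -/
def IsTau (a b : ℝ) (Q11 Q12 Q21 Q22 : ℝ → ℝ) (f g : ℝ → ℂ × ℂ) : Prop :=
  ContinuousOn f (Set.Ioo a b) ∧
  ∀ x₀ ∈ Set.Ioo a b, ∀ x ∈ Set.Ioo a b,
    IntervalIntegrable (fun t => (g t).2 - (Q21 t : ℂ) * (f t).1 - (Q22 t : ℂ) * (f t).2)
      MeasureTheory.volume x₀ x ∧
    IntervalIntegrable (fun t => (Q11 t : ℂ) * (f t).1 + (Q12 t : ℂ) * (f t).2 - (g t).1)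
      MeasureTheory.volume x₀ x ∧
    (f x).1 = (f x₀).1 + ∫ t in x₀..x, ((g t).2 - (Q21 t : ℂ) * (f t).1 - (Q22 t : ℂ) * (f t).2) ∧
    (f x).2 = (f x₀).2 + ∫ t in x₀..x, ((Q11 t : ℂ) * (f t).1 + (Q12 t : ℂ) * (f t).2 - (g t).1)

/-- `u` is a solution of `τ u = z u` on `(a,b)`. -/
def IsSol (a b : ℝ) (Q11 Q12 Q21 Q22 : ℝ → ℝ) (z : ℂ) (u : ℝ → ℂ × ℂ) : Prop :=
  IsTau a b Q11 Q12 Q21 Q22 u (fun x => z • u x)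

/-- Solution of the Dirac equation with mass `m`, electrostatic potential `qel`,
anomalous magnetic moment `qam` and scalar potential `qsc`. -/
def DiracSol (a b m : ℝ) (qel qam qsc : ℝ → ℝ) (z : ℂ) (u : ℝ → ℂ × ℂ) : Prop :=
  IsSol a b (fun x => qel x + m + qsc x) qam qam (fun x => qel x - m - qsc x) z u

namespace AbsolutelyContinuousOnInterval

variable {X Y : Type*} [PseudoMetricSpace X] [PseudoMetricSpace Y] {a b : ℝ}

theorem of_dist_le {f : ℝ → X} {g : ℝ → Y} (K : ℝ) (hf : AbsolutelyContinuousOnInterval f a b)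
    (hgf : ∀ s ∈ uIcc a b, ∀ t ∈ uIcc a b, dist (g s) (g t) ≤ K * dist (f s) (f t)) :
    AbsolutelyContinuousOnInterval g a b := by
  unfold AbsolutelyContinuousOnInterval at hf ⊢
  refine squeeze_zero' (Eventually.of_forall fun E => Finset.sum_nonneg fun _ _ => dist_nonneg)
    ?_ (by simpa using hf.const_mul K)
  rw [eventually_inf_principal]
  filter_upwards with E hE
  rw [Finset.mul_sum]
  exact Finset.sum_le_sum fun i hi => hgf _ (hE.1 i hi).1 _ (hE.1 i hi).2

theorem congr {f g : ℝ → X} (hf : AbsolutelyContinuousOnInterval f a b)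
    (hfg : EqOn f g (uIcc a b)) : AbsolutelyContinuousOnInterval g a b :=
  hf.of_dist_le 1 fun s hs t ht => by rw [← hfg hs, ← hfg ht, one_mul]

theorem _root_.LipschitzWith.comp_absolutelyContinuousOnInterval {g : X → Y} {K : NNReal}
    (hg : LipschitzWith K g) {f : ℝ → X} (hf : AbsolutelyContinuousOnInterval f a b) :
    AbsolutelyContinuousOnInterval (g ∘ f) a b :=
  hf.of_dist_le K fun _ _ _ _ => hg.dist_le_mul _ _

end AbsolutelyContinuousOnInterval

variable {E : Type*} [NormedAddCommGroup E] [NormedSpace ℝ E]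

theorem IntervalIntegrable.absolutelyContinuousOnInterval_integral {f : ℝ → E} {a b c : ℝ}
    (hf : IntervalIntegrable f volume a b) (hc : c ∈ uIcc a b) :
    AbsolutelyContinuousOnInterval (fun x => ∫ t in c..x, f t) a b := by
  refine (hf.norm.absolutelyContinuousOnInterval_intervalIntegral hc).of_dist_le 1
    fun s hs t ht => ?_
  have hcs := hf.mono_set (uIcc_subset_uIcc hc hs)
  have hct := hf.mono_set (uIcc_subset_uIcc hc ht)
  rw [one_mul, dist_eq_norm, dist_eq_norm, intervalIntegral.integral_interval_sub_left hcs hct,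
    intervalIntegral.integral_interval_sub_left hcs.norm hct.norm, Real.norm_eq_abs]
  exact intervalIntegral.norm_integral_le_abs_integral_norm

def IsPrimitiveOn (F f : ℝ → E) (y x : ℝ) : Prop :=
  IntervalIntegrable f volume y x ∧ ∀ t ∈ uIcc y x, F t = F y + ∫ s in y..t, f s

namespace IsPrimitiveOn

variable {F f G g : ℝ → E} {y x : ℝ}

theorem absolutelyContinuousOnInterval (hF : IsPrimitiveOn F f y x) :
    AbsolutelyContinuousOnInterval F y x :=
  (hF.1.absolutelyContinuousOnInterval_integral left_mem_uIcc).of_dist_le 1 fun s hs t ht => by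
    rw [hF.2 s hs, hF.2 t ht, dist_add_left, one_mul]

theorem continuousOn (hF : IsPrimitiveOn F f y x) : ContinuousOn F (uIcc y x) :=
  hF.absolutelyContinuousOnInterval.continuousOn

variable [CompleteSpace E]

theorem ae_hasDerivAt (hF : IsPrimitiveOn F f y x) :
    ∀ᵐ t, t ∈ uIcc y x → HasDerivAt F (f t) t := by
  filter_upwards [hF.1.ae_hasDerivAt_integral, volume.ae_ne y, volume.ae_ne x]
    with t hderiv hty htx ht
  have hnhds : uIcc y x ∈ 𝓝 t :=
    Icc_mem_nhds (by grind [uIcc, min_le_iff, inf_le_iff]) (by grind [uIcc])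
  exact ((hderiv ht y left_mem_uIcc).const_add (F y)).congr_of_eventuallyEq
    (Filter.mem_of_superset hnhds fun s hs => hF.2 s hs)

theorem of_ae_hasDerivAt (hf : IntervalIntegrable f volume y x)
    (hF : AbsolutelyContinuousOnInterval F y x)
    (hderiv : ∀ᵐ t, t ∈ uIcc y x → HasDerivAt F (f t) t) : IsPrimitiveOn F f y x := by
  refine ⟨hf, fun t ht => ?_⟩
  have hdiff : AbsolutelyContinuousOnInterval (fun s => F s - ∫ r in y..s, f r) y x :=
    hF.fun_sub (hf.absolutelyContinuousOnInterval_integral left_mem_uIcc)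
  obtain ⟨C, hC⟩ := hdiff.const_of_ae_hasDerivAt_zero (by
    filter_upwards [hderiv, hf.ae_hasDerivAt_integral] with s hs hs' hmem
    simpa using (hs hmem).fun_sub (hs' hmem y left_mem_uIcc))
  have hCy := hC y left_mem_uIcc
  rw [intervalIntegral.integral_same, sub_zero] at hCy
  rw [hCy, ← hC t ht, sub_add_cancel]

theorem add (hF : IsPrimitiveOn F f y x) (hG : IsPrimitiveOn G g y x) :
    IsPrimitiveOn (fun t => F t + G t) (fun t => f t + g t) y x :=
  of_ae_hasDerivAt (hF.1.add hG.1)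
    (hF.absolutelyContinuousOnInterval.fun_add hG.absolutelyContinuousOnInterval) (by
      filter_upwards [hF.ae_hasDerivAt, hG.ae_hasDerivAt] with t hFt hGt ht
      exact (hFt ht).add (hGt ht))

theorem neg (hF : IsPrimitiveOn F f y x) : IsPrimitiveOn (fun t => -F t) (fun t => -f t) y x :=
  of_ae_hasDerivAt hF.1.neg hF.absolutelyContinuousOnInterval.fun_neg (by
    filter_upwards [hF.ae_hasDerivAt] with t hFt ht
    exact (hFt ht).neg)

theorem comp {θ w : ℝ → ℝ} {g g' : ℝ → E} {K : NNReal} (hθ : IsPrimitiveOn θ w y x)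
    (hg : LipschitzWith K g) (hg' : ∀ r, HasDerivAt g (g' r) r) (hg'c : Continuous g') :
    IsPrimitiveOn (fun t => g (θ t)) (fun t => w t • g' (θ t)) y x :=
  of_ae_hasDerivAt (hθ.1.smul_continuousOn (hg'c.comp_continuousOn hθ.continuousOn))
    (hg.comp_absolutelyContinuousOnInterval hθ.absolutelyContinuousOnInterval) (by
      filter_upwards [hθ.ae_hasDerivAt] with t hθt ht
      exact (hg' (θ t)).scomp t (hθt ht))

theorem mul {F f G g : ℝ → ℂ} (hF : IsPrimitiveOn F f y x) (hG : IsPrimitiveOn G g y x) :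
    IsPrimitiveOn (fun t => F t * G t) (fun t => f t * G t + F t * g t) y x :=
  of_ae_hasDerivAt
    ((hF.1.mul_continuousOn hG.continuousOn).add (hG.1.continuousOn_mul hF.continuousOn))
    (hF.absolutelyContinuousOnInterval.fun_smul hG.absolutelyContinuousOnInterval) (by
      filter_upwards [hF.ae_hasDerivAt, hG.ae_hasDerivAt] with t hFt hGt ht
      exact (hFt ht).fun_mul (hGt ht))

end IsPrimitiveOn

theorem isTau_iff {a b : ℝ} {Q11 Q12 Q21 Q22 : ℝ → ℝ} {f g : ℝ → ℂ × ℂ} :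
    IsTau a b Q11 Q12 Q21 Q22 f g ↔ ∀ y ∈ Ioo a b, ∀ x ∈ Ioo a b,
      IsPrimitiveOn (fun t => (f t).1)
        (fun t => (g t).2 - (Q21 t : ℂ) * (f t).1 - (Q22 t : ℂ) * (f t).2) y x ∧
      IsPrimitiveOn (fun t => (f t).2)
        (fun t => (Q11 t : ℂ) * (f t).1 + (Q12 t : ℂ) * (f t).2 - (g t).1) y x := by
  have hsub {y x : ℝ} (hy : y ∈ Ioo a b) (hx : x ∈ Ioo a b) : uIcc y x ⊆ Ioo a b :=
    ordConnected_Ioo.uIcc_subset hy hx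
  constructor
  · rintro ⟨-, hf⟩ y hy x hx
    exact ⟨⟨(hf y hy x hx).1, fun t ht => (hf y hy t (hsub hy hx ht)).2.2.1⟩,
      ⟨(hf y hy x hx).2.1, fun t ht => (hf y hy t (hsub hy hx ht)).2.2.2⟩⟩
  · intro hf
    refine ⟨fun p hp => ?_, fun y hy x hx =>
      ⟨(hf y hy x hx).1.1, (hf y hy x hx).2.1, (hf y hy x hx).1.2 x right_mem_uIcc,
        (hf y hy x hx).2.2 x right_mem_uIcc⟩⟩
    obtain ⟨y, hay, hyp⟩ := exists_between hp.1
    obtain ⟨x, hpx, hxb⟩ := exists_between hp.2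
    have hy : y ∈ Ioo a b := ⟨hay, hyp.trans hp.2⟩
    have hx : x ∈ Ioo a b := ⟨hp.1.trans hpx, hxb⟩
    have hcont : ContinuousOn f (uIcc y x) :=
      (hf y hy x hx).1.continuousOn.prodMk (hf y hy x hx).2.continuousOn
    exact (hcont.continuousAt (Icc_mem_nhds (by grind [uIcc]) (by grind [uIcc]))).continuousWithinAt

/-- `Γ(θ)⁻¹ p`, where `Γ(θ)` is the rotation of `ℂ²` by the angle `θ`. -/
def rotationInv (θ : ℝ) (p : ℂ × ℂ) : ℂ × ℂ :=
  ((Real.cos θ : ℂ) * p.1 + (Real.sin θ : ℂ) * p.2,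
    -(Real.sin θ : ℂ) * p.1 + (Real.cos θ : ℂ) * p.2)

theorem rotationInv_neg_rotationInv (θ : ℝ) (p : ℂ × ℂ) :
    rotationInv (-θ) (rotationInv θ p) = p := by
  have h := Complex.sin_sq_add_cos_sq (θ : ℂ)
  ext <;> simp only [rotationInv, Real.cos_neg, Real.sin_neg, ofReal_neg, ofReal_cos, ofReal_sin]
  · linear_combination p.1 * h
  · linear_combination p.2 * h

theorem IsSol.map_rotationInv {a b : ℝ} {V M qam w θ : ℝ → ℝ} {z : ℂ} {u : ℝ → ℂ × ℂ}
    (hθ : ∀ y ∈ Ioo a b, ∀ x ∈ Ioo a b, IsPrimitiveOn θ w y x)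
    (hu : IsSol a b (fun t => V t + M t) qam qam (fun t => V t - M t) z u) :
    IsSol a b
      (fun t => V t - w t + (M t * Real.cos (2 * θ t) + qam t * Real.sin (2 * θ t)))
      (fun t => qam t * Real.cos (2 * θ t) - M t * Real.sin (2 * θ t))
      (fun t => qam t * Real.cos (2 * θ t) - M t * Real.sin (2 * θ t))
      (fun t => V t - w t - (M t * Real.cos (2 * θ t) + qam t * Real.sin (2 * θ t)))
      z (fun t => rotationInv (θ t) (u t)) := by
  rw [IsSol, isTau_iff] at hu ⊢
  intro y hy x hx
  obtain ⟨hu₁, hu₂⟩ := hu y hy x hx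
  have hcos : IsPrimitiveOn (fun t => (Real.cos (θ t) : ℂ))
      (fun t => w t • ((-Real.sin (θ t) : ℝ) : ℂ)) y x :=
    (hθ y hy x hx).comp (g := fun r => (Real.cos r : ℂ))
      (Complex.isometry_ofReal.lipschitz.comp Real.lipschitzWith_cos)
      (fun r => (Real.hasDerivAt_cos r).ofReal_comp) (by fun_prop)
  have hsin : IsPrimitiveOn (fun t => (Real.sin (θ t) : ℂ))
      (fun t => w t • (Real.cos (θ t) : ℂ)) y x :=
    (hθ y hy x hx).comp (g := fun r => (Real.sin r : ℂ))
      (Complex.isometry_ofReal.lipschitz.comp Real.lipschitzWith_sin)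
      (fun r => (Real.hasDerivAt_sin r).ofReal_comp) (by fun_prop)
  constructor
  · convert (hcos.mul hu₁).add (hsin.mul hu₂) using 1
    · rfl
    · funext t
      simp only [rotationInv, Prod.smul_fst, Prod.smul_snd, smul_eq_mul, Complex.real_smul]
      rw [Real.cos_two_mul, Real.sin_two_mul]
      push_cast
      linear_combination ((-2 * (qam t : ℂ) * Complex.cos (θ t)) * (u t).1
        + (2 * (M t : ℂ) * Complex.cos (θ t)) * (u t).2) * Complex.sin_sq_add_cos_sq (θ t : ℂ)
  · convert (hsin.neg.mul hu₁).add (hcos.mul hu₂) using 1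
    · rfl
    · funext t
      simp only [rotationInv, Prod.smul_fst, Prod.smul_snd, smul_eq_mul, Complex.real_smul]
      rw [Real.cos_two_mul, Real.sin_two_mul]
      push_cast
      linear_combination ((2 * (M t : ℂ) * Complex.cos (θ t)) * (u t).1
        + (2 * (qam t : ℂ) * Complex.cos (θ t)) * (u t).2) * Complex.sin_sq_add_cos_sq (θ t : ℂ)

theorem isSol_map_rotationInv_iff {a b : ℝ} {V M qam w θ : ℝ → ℝ} {z : ℂ} {u : ℝ → ℂ × ℂ}
    (hθ : ∀ y ∈ Ioo a b, ∀ x ∈ Ioo a b, IsPrimitiveOn θ w y x) :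
    IsSol a b (fun t => V t + M t) qam qam (fun t => V t - M t) z u ↔
    IsSol a b
      (fun t => V t - w t + (M t * Real.cos (2 * θ t) + qam t * Real.sin (2 * θ t)))
      (fun t => qam t * Real.cos (2 * θ t) - M t * Real.sin (2 * θ t))
      (fun t => qam t * Real.cos (2 * θ t) - M t * Real.sin (2 * θ t))
      (fun t => V t - w t - (M t * Real.cos (2 * θ t) + qam t * Real.sin (2 * θ t)))
      z (fun t => rotationInv (θ t) (u t)) := by
  refine ⟨IsSol.map_rotationInv hθ, fun hv => ?_⟩
  have hback := hv.map_rotationInv (V := fun t => V t - w t)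
    (M := fun t => M t * Real.cos (2 * θ t) + qam t * Real.sin (2 * θ t))
    (fun y hy x hx => (hθ y hy x hx).neg)
  simp only [rotationInv_neg_rotationInv] at hback
  convert hback using 2 with t t t t <;> simp only [mul_neg, Real.cos_neg, Real.sin_neg]
  · linear_combination -M t * Real.sin_sq_add_cos_sq (2 * θ t)
  · linear_combination -qam t * Real.sin_sq_add_cos_sq (2 * θ t)
  · linear_combination -qam t * Real.sin_sq_add_cos_sq (2 * θ t)
  · linear_combination M t * Real.sin_sq_add_cos_sq (2 * θ t)

theorem LocInt.isPrimitiveOn_integral {a b : ℝ} {q : ℝ → ℝ} (hq : LocInt a b q) {x₀ : ℝ}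
    (hx₀ : x₀ ∈ Ioo a b) {y x : ℝ} (hy : y ∈ Ioo a b) (hx : x ∈ Ioo a b) :
    IsPrimitiveOn (fun t => ∫ s in x₀..t, q s) q y x :=
  ⟨hq y hy x hx, fun t ht => (intervalIntegral.integral_add_adjacent_intervals (hq x₀ hx₀ y hy)
    (hq y hy t (ordConnected_Ioo.uIcc_subset hy hx ht))).symm⟩

theorem statement1_general
    (a b : ℝ) (m : ℝ)
    (qel qam qsc : ℝ → ℝ)
    (hqel : LocInt a b qel)
    (x₀ : ℝ) (hx₀ : x₀ ∈ Set.Ioo a b)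
    (φ : ℝ → ℝ) (hφ : ∀ x, φ x = ∫ t in x₀..x, qel t)
    (z : ℂ) (u v : ℝ → ℂ × ℂ)
    (hv : ∀ x, v x = ((Real.cos (φ x) : ℂ) * (u x).1 + (Real.sin (φ x) : ℂ) * (u x).2,
                      -(Real.sin (φ x) : ℂ) * (u x).1 + (Real.cos (φ x) : ℂ) * (u x).2)) :
    DiracSol a b m qel qam qsc z u ↔
      IsSol a b
        (fun x => (m + qsc x) * Real.cos (2 * φ x) + qam x * Real.sin (2 * φ x))
        (fun x => qam x * Real.cos (2 * φ x) - (m + qsc x) * Real.sin (2 * φ x))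
        (fun x => qam x * Real.cos (2 * φ x) - (m + qsc x) * Real.sin (2 * φ x))
        (fun x => -((m + qsc x) * Real.cos (2 * φ x) + qam x * Real.sin (2 * φ x)))
        z v := by
  obtain rfl : φ = fun x => ∫ t in x₀..x, qel t := funext hφ
  rw [DiracSol]
  obtain rfl : v = fun x => rotationInv (∫ t in x₀..x, qel t) (u x) := funext hv
  convert isSol_map_rotationInv_iff (V := qel) (M := fun t => m + qsc t)
    fun y hy x hx => hqel.isPrimitiveOn_integral hx₀ hy hx using 3
  all_goals ring

/-- gauge transformation removing the electrostatic potential.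
With `φ(x) = ∫_{x₀}^x q_el` and `Γ(x)` the rotation matrix by the angle `φ(x)`,
`u` solves `τ u = z u` iff `v = Γ⁻¹ u` solves `τ̃ v = z v`, where `τ̃` has vanishing
electrostatic potential, anomalous magnetic moment
`q̃_am = q_am cos(2φ) - (m+q_sc) sin(2φ)` and mass-plus-scalar term
`(m+q_sc) cos(2φ) + q_am sin(2φ)`. -/
theorem statement1
    (a b : ℝ) (hab : a < b) (m : ℝ) (hm : 0 ≤ m)
    (qel qam qsc : ℝ → ℝ)
    (hqel : LocInt a b qel) (hqam : LocInt a b qam) (hqsc : LocInt a b qsc)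
    (x₀ : ℝ) (hx₀ : x₀ ∈ Set.Ioo a b)
    (φ : ℝ → ℝ) (hφ : ∀ x, φ x = ∫ t in x₀..x, qel t)
    (z : ℂ) (u v : ℝ → ℂ × ℂ)
    (hv : ∀ x, v x = ((Real.cos (φ x) : ℂ) * (u x).1 + (Real.sin (φ x) : ℂ) * (u x).2,
                      -(Real.sin (φ x) : ℂ) * (u x).1 + (Real.cos (φ x) : ℂ) * (u x).2)) :
    DiracSol a b m qel qam qsc z u ↔
      IsSol a b
        (fun x => (m + qsc x) * Real.cos (2 * φ x) + qam x * Real.sin (2 * φ x))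
        (fun x => qam x * Real.cos (2 * φ x) - (m + qsc x) * Real.sin (2 * φ x))
        (fun x => qam x * Real.cos (2 * φ x) - (m + qsc x) * Real.sin (2 * φ x))
        (fun x => -((m + qsc x) * Real.cos (2 * φ x) + qam x * Real.sin (2 * φ x)))
        z v :=
  statement1_general a b m qel qam qsc hqel x₀ hx₀ φ hφ z u v hv

end
end

section
/- Suppose that for some λ₀ ∈ ℝ there are real-valued solutions Φ₀, Θ₀ of τu = λ₀u with W(Θ₀,Φ₀) = 1 such that the limits lim_{x→a} W_x(Φ₀, u) and lim_{x→a} W_x(Θ₀, u) exist for every solution u of τu = zu and every z ∈ ℂ. Then for any λ₁ ∈ ℝ and any real-valued solutions Φ₁, Θ₁ of τu = λ₁u with W(Θ₁,Φ₁) = 1, the limits lim_{x→a} W_x(Φ₁, u) and lim_{x→a} W_x(Θ₁, u) also exist for every solution u of τu = zu and every z ∈ ℂ. -/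
open MeasureTheory Set Filter Topology Complex Asymptotics

noncomputable section

/-- `f` is real-valued (componentwise). -/
def RealValued (f : ℝ → ℂ × ℂ) : Prop :=
  ∀ x, starRingEnd ℂ (f x).1 = (f x).1 ∧ starRingEnd ℂ (f x).2 = (f x).2

/-- Hypothesis (LC) is independent of the chosen real value `λ₀`:
if for some `λ₀ ∈ ℝ` there are real solutions `Φ₀, Θ₀` of `τ u = λ₀ u` with
`W(Θ₀,Φ₀) = 1` such that `W_a(Φ₀,u)` and `W_a(Θ₀,u)` exist for every solution `u` of
`τ u = z u` (all `z ∈ ℂ`), then the same holds for any other `λ₁ ∈ ℝ` and any real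
solutions `Φ₁, Θ₁` of `τ u = λ₁ u` with `W(Θ₁,Φ₁) = 1`. -/
theorem statement4
    (a b : ℝ) (hab : a < b) (m : ℝ) (hm : 0 ≤ m)
    (qel qam qsc : ℝ → ℝ)
    (hqel : LocInt a b qel) (hqam : LocInt a b qam) (hqsc : LocInt a b qsc)
    (lam₀ : ℝ) (Φ₀ Θ₀ : ℝ → ℂ × ℂ)
    (hΦ₀ : DiracSol a b m qel qam qsc (lam₀ : ℂ) Φ₀)
    (hΘ₀ : DiracSol a b m qel qam qsc (lam₀ : ℂ) Θ₀)
    (hΦ₀r : RealValued Φ₀) (hΘ₀r : RealValued Θ₀)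
    (hW₀ : ∀ x ∈ Set.Ioo a b, Wr Θ₀ Φ₀ x = 1)
    (hyp : ∀ z : ℂ, ∀ u : ℝ → ℂ × ℂ, DiracSol a b m qel qam qsc z u →
      (∃ L : ℂ, Filter.Tendsto (fun x => Wr Φ₀ u x) (nhdsWithin a (Set.Ioi a)) (nhds L)) ∧
      (∃ L : ℂ, Filter.Tendsto (fun x => Wr Θ₀ u x) (nhdsWithin a (Set.Ioi a)) (nhds L)))
    (lam₁ : ℝ) (Φ₁ Θ₁ : ℝ → ℂ × ℂ)
    (hΦ₁ : DiracSol a b m qel qam qsc (lam₁ : ℂ) Φ₁)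
    (hΘ₁ : DiracSol a b m qel qam qsc (lam₁ : ℂ) Θ₁)
    (hΦ₁r : RealValued Φ₁) (hΘ₁r : RealValued Θ₁)
    (hW₁ : ∀ x ∈ Set.Ioo a b, Wr Θ₁ Φ₁ x = 1) :
    ∀ z : ℂ, ∀ u : ℝ → ℂ × ℂ, DiracSol a b m qel qam qsc z u →
      (∃ L : ℂ, Filter.Tendsto (fun x => Wr Φ₁ u x) (nhdsWithin a (Set.Ioi a)) (nhds L)) ∧
      (∃ L : ℂ, Filter.Tendsto (fun x => Wr Θ₁ u x) (nhdsWithin a (Set.Ioi a)) (nhds L)) := by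
  intro z u hu
  obtain ⟨⟨L1, hL1⟩, ⟨L2, hL2⟩⟩ := hyp z u hu
  obtain ⟨⟨A1, hA1⟩, ⟨A2, hA2⟩⟩ := hyp (lam₁ : ℂ) Φ₁ hΦ₁
  obtain ⟨⟨B1, hB1⟩, ⟨B2, hB2⟩⟩ := hyp (lam₁ : ℂ) Θ₁ hΘ₁
  have hmem : Set.Ioo a b ∈ nhdsWithin a (Set.Ioi a) :=
    Ioo_mem_nhdsGT_of_mem ⟨le_refl a, hab⟩
  constructor
  · refine ⟨A2 * L1 - A1 * L2, Filter.Tendsto.congr' ?_ ((hA2.mul hL1).sub (hA1.mul hL2))⟩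
    filter_upwards [hmem] with x hx
    have h1 := hW₀ x hx
    calc Wr Θ₀ Φ₁ x * Wr Φ₀ u x - Wr Φ₀ Φ₁ x * Wr Θ₀ u x
        = Wr Φ₁ u x * Wr Θ₀ Φ₀ x := by simp only [Wr]; ring
      _ = Wr Φ₁ u x := by rw [h1, mul_one]
  · refine ⟨B2 * L1 - B1 * L2, Filter.Tendsto.congr' ?_ ((hB2.mul hL1).sub (hB1.mul hL2))⟩
    filter_upwards [hmem] with x hx
    have h1 := hW₀ x hx
    calc Wr Θ₀ Θ₁ x * Wr Φ₀ u x - Wr Φ₀ Θ₁ x * Wr Θ₀ u x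
        = Wr Θ₁ u x * Wr Θ₀ Φ₀ x := by simp only [Wr]; ring
      _ = Wr Θ₁ u x := by rw [h1, mul_one]
end
end

section
/- Suppose τ is in the limit circle case at a, i.e., for every z ∈ ℂ every solution of τu = zu is square integrable near a. Fix λ₀ ∈ ℝ and real-valued solutions Φ₀, Θ₀ of τu = λ₀u with W(Θ₀,Φ₀) = 1. Then the limits lim_{x→a} W_x(Φ₀, u) and lim_{x→a} W_x(Θ₀, u) exist for every solution u of τu = zu and every z ∈ ℂ. Moreover, if u(z,x) is a family of solutions of τu = zu which is holomorphic in z (for each fixed x), then z ↦ lim_{x→a} W_x(Φ₀, u(z)) and z ↦ lim_{x→a} W_x(Θ₀, u(z)) are holomorphic. -/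
/-
For a solution `f` of `τ f = λ₀ f` and a solution `u` of `τ u = z u`, the Lagrange identity
`W_y(f,u) - W_x(f,u) = (λ₀ - z) ∫_x^y (f₁u₁ + f₂u₂)` together with square integrability of `f` and
`u` near `a` makes `W_x(f,u)` converge as `x → a`.

For holomorphy, `W(Θ₀,Φ₀) = 1` gives `u = W(Θ₀,u) Φ₀ - W(Φ₀,u) Θ₀`, so the two Wronskians control
`u` pointwise. On an interval `(a,c]` so short that `|λ₀ - z| ∫_a^c (|Φ₀|² + |Θ₀|²)` is small, the
Lagrange identity then bounds both Wronskians on `(a,c]` by twice their value at `c`, locally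
uniformly in `z`. Hence `W_x(Φ₀,u(z))` and `W_x(Θ₀,u(z))` converge locally uniformly in `z`, and
a locally uniform limit of holomorphic functions is holomorphic.
-/

open MeasureTheory Set Filter Topology Complex Asymptotics

noncomputable section

/-- `f` is square integrable on `S`. -/
def SqIntOn (S : Set ℝ) (f : ℝ → ℂ × ℂ) : Prop :=
  MeasureTheory.IntegrableOn (fun x => ‖(f x).1‖ ^ 2 + ‖(f x).2‖ ^ 2) S MeasureTheory.volume



theorem integral_primitive_mul_add_mul_primitive {c x : ℝ} {f g : ℝ → ℂ}
    (hf : IntegrableOn f (Ioc c x)) (hg : IntegrableOn g (Ioc c x)) :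
    ((∫ t in Ioc c x, (∫ s in Ioc c t, f s) * g t) + ∫ s in Ioc c x, f s * ∫ t in Ioc c s, g t)
      = (∫ s in Ioc c x, f s) * ∫ t in Ioc c x, g t := by
  set μ := volume.restrict (Ioc c x)
  have hfg : Integrable (fun p : ℝ × ℝ => f p.1 * g p.2) (μ.prod μ) := hf.mul_prod hg
  set L := {p : ℝ × ℝ | p.1 ≤ p.2}
  have hL : MeasurableSet L := measurableSet_le measurable_fst measurable_snd
  have lower : ∫ p in L, f p.1 * g p.2 ∂(μ.prod μ)
      = ∫ t in Ioc c x, (∫ s in Ioc c t, f s) * g t := by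
    rw [← integral_indicator hL, integral_prod_symm _ (hfg.indicator hL)]
    refine setIntegral_congr_fun measurableSet_Ioc fun t ht => ?_
    have : ∀ s, L.indicator (fun p : ℝ × ℝ => f p.1 * g p.2) (s, t)
        = (Iic t).indicator f s * g t :=
      fun s => by by_cases h : s ≤ t <;> simp [L, h]
    simp_rw [this, integral_mul_const, integral_indicator measurableSet_Iic, μ,
      Measure.restrict_restrict measurableSet_Iic, Iic_inter_Ioc_of_le ht.2]
  have upper : ∫ p in Lᶜ, f p.1 * g p.2 ∂(μ.prod μ)
      = ∫ s in Ioc c x, f s * ∫ t in Ioc c s, g t := by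
    rw [← integral_indicator hL.compl, integral_prod _ (hfg.indicator hL.compl)]
    refine setIntegral_congr_fun measurableSet_Ioc fun s hs => ?_
    have : ∀ t, Lᶜ.indicator (fun p : ℝ × ℝ => f p.1 * g p.2) (s, t)
        = f s * (Iio s).indicator g t :=
      fun t => by by_cases h : t < s <;> simp [L, h]
    have hIoo : Iio s ∩ Ioc c x = Ioo c s := by
      ext t; simp only [mem_inter_iff, mem_Iio, mem_Ioc, mem_Ioo]
      constructor
      · rintro ⟨h1, h2, -⟩; exact ⟨h2, h1⟩
      · rintro ⟨h1, h2⟩; exact ⟨h2, h1, h2.le.trans hs.2⟩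
    simp_rw [this, integral_const_mul, integral_indicator measurableSet_Iio, μ,
      Measure.restrict_restrict measurableSet_Iio, hIoo, integral_Ioc_eq_integral_Ioo]
  rw [← lower, ← upper, integral_add_compl hL hfg, integral_prod_mul]

theorem mul_sub_mul_eq_integral_of_eq_primitive {c x : ℝ} (hcx : c ≤ x) {F G f g : ℝ → ℂ}
    (hF : ∀ t ∈ Icc c x, F t = F c + ∫ s in c..t, f s)
    (hG : ∀ t ∈ Icc c x, G t = G c + ∫ s in c..t, g s)
    (hf : IntervalIntegrable f volume c x) (hg : IntervalIntegrable g volume c x) :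
    F x * G x - F c * G c = ∫ t in c..x, (F t * g t + f t * G t) := by
  have hi₁ : IntervalIntegrable (fun t => (∫ s in c..t, f s) * g t) volume c x :=
    hg.continuousOn_mul (intervalIntegral.continuousOn_primitive_interval' hf left_mem_uIcc)
  have hi₂ : IntervalIntegrable (fun t => f t * ∫ s in c..t, g s) volume c x :=
    hf.mul_continuousOn (intervalIntegral.continuousOn_primitive_interval' hg left_mem_uIcc)
  have fubini : (∫ t in c..x, (∫ s in c..t, f s) * g t) + (∫ t in c..x, f t * ∫ s in c..t, g s)
      = (∫ s in c..x, f s) * ∫ s in c..x, g s := by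
    have hprim : ∀ h : ℝ → ℂ, EqOn (fun t => ∫ s in c..t, h s) (fun t => ∫ s in Ioc c t, h s)
        (Ioc c x) := fun h t ht => intervalIntegral.integral_of_le ht.1.le
    simp only [intervalIntegral.integral_of_le hcx]
    rw [setIntegral_congr_fun measurableSet_Ioc fun t ht => congrArg (· * g t) (hprim f ht),
      setIntegral_congr_fun measurableSet_Ioc fun t ht => congrArg (f t * ·) (hprim g ht)]
    rw [intervalIntegrable_iff_integrableOn_Ioc_of_le hcx] at hf hg
    exact integral_primitive_mul_add_mul_primitive hf hg
  have hcongr : EqOn (fun t => F t * g t + f t * G t) (fun t => (F c * g t + G c * f t)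
      + ((∫ s in c..t, f s) * g t + f t * ∫ s in c..t, g s)) (uIcc c x) := fun t ht => by
    simp only [hF t (uIcc_of_le hcx ▸ ht), hG t (uIcc_of_le hcx ▸ ht)]
    ring
  rw [intervalIntegral.integral_congr hcongr,
    intervalIntegral.integral_add ((hg.const_mul _).add (hf.const_mul _)) (hi₁.add hi₂),
    intervalIntegral.integral_add (hg.const_mul _) (hf.const_mul _),
    intervalIntegral.integral_add hi₁ hi₂, fubini, intervalIntegral.integral_const_mul,
    intervalIntegral.integral_const_mul, hF x (right_mem_Icc.2 hcx), hG x (right_mem_Icc.2 hcx)]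
  ring

theorem IntervalIntegrable.tendsto_integral_nhdsGT {g : ℝ → ℝ} {a c : ℝ} (hac : a < c)
    (hg : IntervalIntegrable g volume a c) :
    Tendsto (fun x => ∫ t in a..x, g t) (𝓝[>] a) (𝓝 0) := by
  have := (intervalIntegral.continuousOn_primitive_interval' hg left_mem_uIcc) a left_mem_uIcc
  rw [ContinuousWithinAt, intervalIntegral.integral_same, uIcc_of_le hac.le] at this
  rw [← nhdsWithin_Ioc_eq_nhdsGT hac]
  exact this.mono_left (nhdsWithin_mono _ Ioc_subset_Icc_self)

theorem bddAbove_image_Ioc_of_tendsto {g : ℝ → ℝ} {a c L : ℝ} (hg : ContinuousOn g (Ioc a c))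
    (hL : Tendsto g (𝓝[>] a) (𝓝 L)) : BddAbove (g '' Ioc a c) := by
  obtain ⟨d, hd, hdL⟩ := mem_nhdsGT_iff_exists_Ioo_subset.1 (hL.eventually_le_const (lt_add_one L))
  refine ⟨max (L + 1) (sSup (g '' Icc d c)), ?_⟩
  rintro _ ⟨t, ht, rfl⟩
  rcases lt_or_ge t d with htd | htd
  · exact le_max_of_le_left (hdL ⟨ht.1, htd⟩)
  · refine le_max_of_le_right (le_csSup ?_ (mem_image_of_mem g ⟨htd, ht.2⟩))
    exact isCompact_Icc.bddAbove_image (hg.mono fun s hs => ⟨hd.trans_le hs.1, hs.2⟩)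

def pairing (f u : ℝ → ℂ × ℂ) (t : ℝ) : ℂ := (f t).1 * (u t).1 + (f t).2 * (u t).2

section Lagrange

variable {a b : ℝ} {Q11 Q12 Q22 : ℝ → ℝ} {lam z : ℂ} {f u : ℝ → ℂ × ℂ}

theorem IsSol.wr_sub_wr (hf : IsSol a b Q11 Q12 Q12 Q22 lam f)
    (hu : IsSol a b Q11 Q12 Q12 Q22 z u) {x y : ℝ} (hx : x ∈ Ioo a b) (hy : y ∈ Ioo a b) :
    Wr f u y - Wr f u x = (lam - z) * ∫ t in x..y, pairing f u t := by
  wlog hxy : x ≤ y generalizing x y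
  · rw [intervalIntegral.integral_symm, ← neg_sub, this hy hx (le_of_not_ge hxy)]
    ring
  obtain ⟨hfc, hf⟩ := hf
  obtain ⟨huc, hu⟩ := hu
  have hsub : Icc x y ⊆ Ioo a b := Icc_subset_Ioo hx.1 hy.2
  have hsub' : uIcc x y ⊆ Ioo a b := uIcc_of_le hxy ▸ hsub
  obtain ⟨hf₁, hf₂, -, -⟩ := hf x hx y hy
  obtain ⟨hu₁, hu₂, -, -⟩ := hu x hx y hy
  have e₁ := mul_sub_mul_eq_integral_of_eq_primitive hxy
    (fun t ht => (hf x hx t (hsub ht)).2.2.1) (fun t ht => (hu x hx t (hsub ht)).2.2.2) hf₁ hu₂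
  have e₂ := mul_sub_mul_eq_integral_of_eq_primitive hxy
    (fun t ht => (hf x hx t (hsub ht)).2.2.2) (fun t ht => (hu x hx t (hsub ht)).2.2.1) hf₂ hu₁
  have i₁ := (hu₂.continuousOn_mul (hfc.mono hsub').fst).add
    (hf₁.mul_continuousOn (huc.mono hsub').snd)
  have i₂ := (hu₁.continuousOn_mul (hfc.mono hsub').snd).add
    (hf₂.mul_continuousOn (huc.mono hsub').fst)
  rw [show Wr f u y - Wr f u x = ((f y).1 * (u y).2 - (f x).1 * (u x).2)
      - ((f y).2 * (u y).1 - (f x).2 * (u x).1) by simp only [Wr]; ring,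
    e₁, e₂, ← intervalIntegral.integral_sub i₁ i₂, ← intervalIntegral.integral_const_mul]
  congr 1
  ext t
  simp only [pairing, Prod.smul_fst, Prod.smul_snd, smul_eq_mul]
  ring

end Lagrange

theorem norm_sq_le_norm_fst_sq_add_norm_snd_sq (v : ℂ × ℂ) : ‖v‖ ^ 2 ≤ ‖v.1‖ ^ 2 + ‖v.2‖ ^ 2 := by
  rw [Prod.norm_def]
  rcases max_choice ‖v.1‖ ‖v.2‖ with h | h <;> rw [h] <;>
    nlinarith [sq_nonneg ‖v.1‖, sq_nonneg ‖v.2‖]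

theorem norm_pairing_le (f u : ℝ → ℂ × ℂ) (t : ℝ) : ‖pairing f u t‖ ≤ 2 * ‖f t‖ * ‖u t‖ := by
  calc ‖pairing f u t‖ ≤ ‖(f t).1‖ * ‖(u t).1‖ + ‖(f t).2‖ * ‖(u t).2‖ := by
        simpa only [pairing, norm_mul] using norm_add_le ((f t).1 * (u t).1) ((f t).2 * (u t).2)
    _ ≤ ‖f t‖ * ‖u t‖ + ‖f t‖ * ‖u t‖ := by
        gcongr
        exacts [norm_fst_le (f t), norm_fst_le (u t), norm_snd_le (f t), norm_snd_le (u t)]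
    _ = 2 * ‖f t‖ * ‖u t‖ := by ring

def SqIntNear (a b : ℝ) (u : ℝ → ℂ × ℂ) : Prop :=
  ∀ c ∈ Ioo a b, IntervalIntegrable (fun t => ‖u t‖ ^ 2) volume a c

section LimitCircle

variable {a b : ℝ} {Q11 Q12 Q22 : ℝ → ℝ} {lam z : ℂ} {f u : ℝ → ℂ × ℂ}

theorem SqIntOn.sqIntNear {c₀ : ℝ} (h : SqIntOn (Ioo a c₀) u) (hc₀ : c₀ ∈ Ioo a b)
    (hu : ContinuousOn u (Ioo a b)) : SqIntNear a b u := by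
  intro c hc
  have hcont : ContinuousOn (fun t => ‖u t‖ ^ 2) (Ioo a b) := hu.norm.pow 2
  have hnear : IntegrableOn (fun t => ‖u t‖ ^ 2) (Ioo a c₀) :=
    h.mono' ((hcont.mono (Ioo_subset_Ioo_right hc₀.2.le)).aestronglyMeasurable measurableSet_Ioo)
      (ae_of_all _ fun t => by
        simpa only [Real.norm_eq_abs, abs_pow, abs_norm] using
          norm_sq_le_norm_fst_sq_add_norm_snd_sq (u t))
  have hfar : IntegrableOn (fun t => ‖u t‖ ^ 2) (Icc c₀ c) :=
    (hcont.mono (Icc_subset_Ioo hc₀.1 hc.2)).integrableOn_Icc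
  rw [intervalIntegrable_iff_integrableOn_Ioc_of_le hc.1.le]
  refine (hnear.union hfar).mono_set fun t ht => ?_
  rcases lt_or_ge t c₀ with h | h
  · exact Or.inl ⟨ht.1, h⟩
  · exact Or.inr ⟨h, ht.2⟩

theorem SqIntNear.intervalIntegrable_pairing (hf : SqIntNear a b f) (hu : SqIntNear a b u)
    (hfc : ContinuousOn f (Ioo a b)) (huc : ContinuousOn u (Ioo a b)) {c : ℝ} (hc : c ∈ Ioo a b) :
    IntervalIntegrable (pairing f u) volume a c := by
  have hsub : Ioc a c ⊆ Ioo a b := Ioc_subset_Ioo_right hc.2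
  have hmeas : AEStronglyMeasurable (pairing f u) (volume.restrict (Ioc a c)) :=
    (((hfc.fst.mul huc.fst).add (hfc.snd.mul huc.snd)).mono hsub).aestronglyMeasurable
      measurableSet_Ioc
  have hsq := (hf c hc).add (hu c hc)
  rw [intervalIntegrable_iff_integrableOn_Ioc_of_le hc.1.le] at hsq ⊢
  refine Integrable.mono' hsq hmeas (ae_of_all _ fun t => ?_)
  exact (norm_pairing_le f u t).trans (two_mul_le_add_sq _ _)

theorem IsSol.tendsto_wr (hf : IsSol a b Q11 Q12 Q12 Q22 lam f)
    (hu : IsSol a b Q11 Q12 Q12 Q22 z u) {c : ℝ} (hc : c ∈ Ioo a b)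
    (hp : IntervalIntegrable (pairing f u) volume a c) :
    Tendsto (Wr f u) (𝓝[>] a) (𝓝 (Wr f u c - (lam - z) * ∫ t in a..c, pairing f u t)) := by
  have hprim : ContinuousWithinAt (fun x => ∫ t in x..c, pairing f u t) (Ioc a c) a := by
    rw [intervalIntegrable_iff_integrableOn_Ioc_of_le hc.1.le,
      ← integrableOn_Icc_iff_integrableOn_Ioc, ← uIcc_of_le hc.1.le] at hp
    exact ((intervalIntegral.continuousOn_primitive_interval_left hp) a left_mem_uIcc).mono
      (uIcc_of_le hc.1.le ▸ Ioc_subset_Icc_self)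
  rw [ContinuousWithinAt, nhdsWithin_Ioc_eq_nhdsGT hc.1] at hprim
  refine ((tendsto_const_nhds (x := Wr f u c)).sub (hprim.const_mul (lam - z))).congr' ?_
  filter_upwards [Ioo_mem_nhdsGT hc.1] with x hx
  rw [← hf.wr_sub_wr hu ⟨hx.1, hx.2.trans hc.2⟩ hc]
  ring

theorem IsSol.exists_tendsto_wr (hab : a < b) (hf : IsSol a b Q11 Q12 Q12 Q22 lam f)
    (hu : IsSol a b Q11 Q12 Q12 Q22 z u) (hfsq : SqIntNear a b f) (husq : SqIntNear a b u) :
    ∃ L, Tendsto (Wr f u) (𝓝[>] a) (𝓝 L) :=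
  have hc : (a + b) / 2 ∈ Ioo a b := ⟨left_lt_add_div_two.2 hab, add_div_two_lt_right.2 hab⟩
  ⟨_, hf.tendsto_wr hu hc (hfsq.intervalIntegrable_pairing husq hf.1 hu.1 hc)⟩

theorem IsSol.norm_wr_sub_wr_le (hf : IsSol a b Q11 Q12 Q12 Q22 lam f)
    (hu : IsSol a b Q11 Q12 Q12 Q22 z u) {x y : ℝ} (hx : x ∈ Ioo a b) (hy : y ∈ Ioo a b)
    (hxy : x ≤ y) {K : ℝ} {ρ : ℝ → ℝ} (hρ : IntervalIntegrable ρ volume x y)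
    (hp : ∀ t ∈ Ioc x y, ‖pairing f u t‖ ≤ K * ρ t) :
    ‖Wr f u y - Wr f u x‖ ≤ ‖lam - z‖ * (K * ∫ t in x..y, ρ t) := by
  rw [hf.wr_sub_wr hu hx hy, norm_mul, ← intervalIntegral.integral_const_mul]
  gcongr
  exact intervalIntegral.norm_integral_le_of_norm_le hxy (ae_of_all _ hp) (hρ.const_mul K)

theorem IsSol.norm_lim_sub_wr_le (hf : IsSol a b Q11 Q12 Q12 Q22 lam f)
    (hu : IsSol a b Q11 Q12 Q12 Q22 z u) {x : ℝ} (hx : x ∈ Ioo a b)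
    (hpx : IntervalIntegrable (pairing f u) volume a x) {L : ℂ}
    (hL : Tendsto (Wr f u) (𝓝[>] a) (𝓝 L)) {K : ℝ} {ρ : ℝ → ℝ}
    (hρ : IntervalIntegrable ρ volume a x) (hp : ∀ t ∈ Ioc a x, ‖pairing f u t‖ ≤ K * ρ t) :
    ‖L - Wr f u x‖ ≤ ‖lam - z‖ * (K * ∫ t in a..x, ρ t) := by
  rw [tendsto_nhds_unique hL (hf.tendsto_wr hu hx hpx), sub_sub_cancel_left, norm_neg, norm_mul,
    ← intervalIntegral.integral_const_mul]
  gcongr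
  exact intervalIntegral.norm_integral_le_of_norm_le hx.1.le (ae_of_all _ hp) (hρ.const_mul K)

end LimitCircle

section Decomposition

variable {Φ Θ f u : ℝ → ℂ × ℂ} {t : ℝ}

theorem eq_wr_smul_sub_wr_smul (hW : Wr Θ Φ t = 1) : u t = Wr Θ u t • Φ t - Wr Φ u t • Θ t := by
  simp only [Wr] at hW ⊢
  ext <;> simp only [Prod.fst_sub, Prod.snd_sub, Prod.smul_fst, Prod.smul_snd, smul_eq_mul]
  · linear_combination (-(u t).1) * hW
  · linear_combination (-(u t).2) * hW

theorem norm_le_of_wr_eq_one (hW : Wr Θ Φ t = 1) :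
    ‖u t‖ ≤ (‖Wr Φ u t‖ + ‖Wr Θ u t‖) * (‖Φ t‖ + ‖Θ t‖) := by
  calc ‖u t‖ ≤ ‖Wr Θ u t‖ * ‖Φ t‖ + ‖Wr Φ u t‖ * ‖Θ t‖ := by
        rw [eq_wr_smul_sub_wr_smul (u := u) hW, ← norm_smul, ← norm_smul]
        exact norm_sub_le _ _
    _ ≤ (‖Wr Φ u t‖ + ‖Wr Θ u t‖) * (‖Φ t‖ + ‖Θ t‖) := by
        nlinarith [norm_nonneg (Wr Φ u t), norm_nonneg (Wr Θ u t), norm_nonneg (Φ t),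
          norm_nonneg (Θ t)]

theorem norm_pairing_le_of_wr_eq_one (hW : Wr Θ Φ t = 1) (hf : ‖f t‖ ≤ ‖Φ t‖ + ‖Θ t‖) {K : ℝ}
    (hK : ‖Wr Φ u t‖ + ‖Wr Θ u t‖ ≤ K) :
    ‖pairing f u t‖ ≤ 4 * K * (‖Φ t‖ ^ 2 + ‖Θ t‖ ^ 2) := by
  have hu : ‖u t‖ ≤ K * (‖Φ t‖ + ‖Θ t‖) :=
    (norm_le_of_wr_eq_one hW).trans (by gcongr)
  have hK0 : 0 ≤ K := (by positivity : (0 : ℝ) ≤ ‖Wr Φ u t‖ + ‖Wr Θ u t‖).trans hK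
  calc ‖pairing f u t‖ ≤ 2 * ‖f t‖ * ‖u t‖ := norm_pairing_le f u t
    _ ≤ 2 * (‖Φ t‖ + ‖Θ t‖) * (K * (‖Φ t‖ + ‖Θ t‖)) := by gcongr
    _ ≤ 4 * K * (‖Φ t‖ ^ 2 + ‖Θ t‖ ^ 2) := by
        nlinarith [mul_nonneg hK0 (sq_nonneg (‖Φ t‖ - ‖Θ t‖))]

end Decomposition

section APrioriBound

variable {a b : ℝ} {Q11 Q12 Q22 : ℝ → ℝ} {lam z : ℂ} {Φ Θ u : ℝ → ℂ × ℂ}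

theorem IsSol.wr_le_two_mul_wr (hΦ : IsSol a b Q11 Q12 Q12 Q22 lam Φ)
    (hΘ : IsSol a b Q11 Q12 Q12 Q22 lam Θ) (hW : ∀ x ∈ Ioo a b, Wr Θ Φ x = 1)
    (hΦsq : SqIntNear a b Φ) (hΘsq : SqIntNear a b Θ) (hu : IsSol a b Q11 Q12 Q12 Q22 z u)
    (husq : SqIntNear a b u) {c : ℝ} (hc : c ∈ Ioo a b)
    (hsmall : 16 * ‖lam - z‖ * ∫ t in a..c, (‖Φ t‖ ^ 2 + ‖Θ t‖ ^ 2) ≤ 1) :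
    ∀ x ∈ Ioc a c, ‖Wr Φ u x‖ + ‖Wr Θ u x‖ ≤ 2 * (‖Wr Φ u c‖ + ‖Wr Θ u c‖) := by
  set G : ℝ → ℝ := fun x => ‖Wr Φ u x‖ + ‖Wr Θ u x‖
  have hsub : Ioc a c ⊆ Ioo a b := Ioc_subset_Ioo_right hc.2
  have hcc : c ∈ Ioc a c := right_mem_Ioc.2 hc.1
  have hbdd : BddAbove (G '' Ioc a c) := by
    have hcont : ∀ f, IsSol a b Q11 Q12 Q12 Q22 lam f →
        ContinuousOn (fun x => ‖Wr f u x‖) (Ioc a c) :=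
      fun f hf => (((hf.1.fst.mul hu.1.snd).sub (hf.1.snd.mul hu.1.fst)).mono hsub).norm
    exact bddAbove_image_Ioc_of_tendsto ((hcont Φ hΦ).add (hcont Θ hΘ))
      ((hΦ.tendsto_wr hu hc (hΦsq.intervalIntegrable_pairing husq hΦ.1 hu.1 hc)).norm.add
        (hΘ.tendsto_wr hu hc (hΘsq.intervalIntegrable_pairing husq hΘ.1 hu.1 hc)).norm)
  set M := sSup (G '' Ioc a c)
  have hGM : ∀ x ∈ Ioc a c, G x ≤ M := fun x hx => le_csSup hbdd (mem_image_of_mem G hx)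
  have hρ : IntervalIntegrable (fun t => ‖Φ t‖ ^ 2 + ‖Θ t‖ ^ 2) volume a c :=
    (hΦsq c hc).add (hΘsq c hc)
  have hM0 : 0 ≤ M := (by positivity : (0 : ℝ) ≤ G c).trans (hGM c hcc)
  -- `‖u‖ ≤ M (‖Φ‖ + ‖Θ‖)` on `(a, c]`, so by `hsmall` each Wronskian moves by at most `M / 4`
  have hmove : ∀ f, IsSol a b Q11 Q12 Q12 Q22 lam f → (∀ t, ‖f t‖ ≤ ‖Φ t‖ + ‖Θ t‖) →
      ∀ x ∈ Ioc a c, ‖Wr f u x‖ ≤ ‖Wr f u c‖ + M / 4 := by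
    intro f hf hfΦΘ x hx
    have hxc : Ioc x c ⊆ Ioc a c := Ioc_subset_Ioc_left hx.1.le
    have hle := hf.norm_wr_sub_wr_le hu (hsub hx) hc hx.2
      (hρ.mono_set (uIcc_subset_uIcc_right (mem_uIcc_of_le hx.1.le hx.2)))
      fun t ht => norm_pairing_le_of_wr_eq_one (hW t (hsub (hxc ht))) (hfΦΘ t) (hGM t (hxc ht))
    have hI : ∫ t in x..c, (‖Φ t‖ ^ 2 + ‖Θ t‖ ^ 2) ≤ ∫ t in a..c, (‖Φ t‖ ^ 2 + ‖Θ t‖ ^ 2) :=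
      intervalIntegral.integral_mono_interval hx.1.le hx.2 le_rfl
        (ae_of_all _ fun t => by positivity) hρ
    calc ‖Wr f u x‖ ≤ ‖Wr f u c‖ + ‖Wr f u c - Wr f u x‖ := by
          rw [norm_sub_rev]; exact norm_le_insert' _ _
      _ ≤ ‖Wr f u c‖ + ‖lam - z‖ * (4 * M * ∫ t in a..c, (‖Φ t‖ ^ 2 + ‖Θ t‖ ^ 2)) := by
          grw [hle, hI]
      _ ≤ ‖Wr f u c‖ + M / 4 := by nlinarith
  have hstep : ∀ x ∈ Ioc a c, G x ≤ G c + M / 2 := fun x hx => by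
    have := hmove Φ hΦ (fun t => le_add_of_nonneg_right (norm_nonneg _)) x hx
    have := hmove Θ hΘ (fun t => le_add_of_nonneg_left (norm_nonneg _)) x hx
    simp only [G]
    linarith
  have hM : M ≤ 2 * G c := by
    have : M ≤ G c + M / 2 := csSup_le ((nonempty_of_mem hcc).image G) (forall_mem_image.2 hstep)
    linarith
  exact fun x hx => (hGM x hx).trans hM

end APrioriBound

section Holomorphy

open Metric

variable {a b : ℝ} {Q11 Q12 Q22 : ℝ → ℝ} {lam : ℂ} {Φ Θ f : ℝ → ℂ × ℂ} {u : ℂ → ℝ → ℂ × ℂ}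

theorem differentiable_wr {x : ℝ}
    (hux : Differentiable ℂ (fun z => (u z x).1) ∧ Differentiable ℂ (fun z => (u z x).2)) :
    Differentiable ℂ (fun z => Wr f (u z) x) :=
  ((differentiable_const _).mul hux.2).sub ((differentiable_const _).mul hux.1)

theorem exists_norm_lim_sub_wr_le (hab : a < b) (hΦ : IsSol a b Q11 Q12 Q12 Q22 lam Φ)
    (hΘ : IsSol a b Q11 Q12 Q12 Q22 lam Θ) (hW : ∀ x ∈ Ioo a b, Wr Θ Φ x = 1)
    (hΦsq : SqIntNear a b Φ) (hΘsq : SqIntNear a b Θ)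
    (hu : ∀ z, IsSol a b Q11 Q12 Q12 Q22 z (u z)) (husq : ∀ z, SqIntNear a b (u z))
    (hdiff : ∀ x ∈ Ioo a b,
      Differentiable ℂ (fun z => (u z x).1) ∧ Differentiable ℂ (fun z => (u z x).2))
    (hf : IsSol a b Q11 Q12 Q12 Q22 lam f) (hfsq : SqIntNear a b f)
    (hfΦΘ : ∀ t, ‖f t‖ ≤ ‖Φ t‖ + ‖Θ t‖) {W : ℂ → ℂ}
    (hWlim : ∀ z, Tendsto (Wr f (u z)) (𝓝[>] a) (𝓝 (W z))) (z₀ : ℂ) :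
    ∃ c ∈ Ioo a b, ∃ C, ∀ z ∈ closedBall z₀ 1, ∀ x ∈ Ioo a c,
      ‖W z - Wr f (u z) x‖ ≤ C * ∫ t in a..x, (‖Φ t‖ ^ 2 + ‖Θ t‖ ^ 2) := by
  set ρ : ℝ → ℝ := fun t => ‖Φ t‖ ^ 2 + ‖Θ t‖ ^ 2
  have hρ : ∀ c ∈ Ioo a b, IntervalIntegrable ρ volume a c :=
    fun c hc => (hΦsq c hc).add (hΘsq c hc)
  have hρ0 : ∀ c, a ≤ c → 0 ≤ ∫ t in a..c, ρ t :=
    fun c hc => intervalIntegral.integral_nonneg hc fun t _ => by positivity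
  set γ := ‖lam - z₀‖ + 1
  have hγ : ∀ z ∈ closedBall z₀ 1, ‖lam - z‖ ≤ γ := fun z hz => by
    have := norm_sub_le_norm_sub_add_norm_sub lam z₀ z
    rw [← dist_eq_norm z₀ z, dist_comm] at this
    exact this.trans (add_le_add_right hz _)
  obtain ⟨c₀, hc₀⟩ := nonempty_Ioo.2 hab
  obtain ⟨c, hsmall, hc⟩ := ((((hρ c₀ hc₀).tendsto_integral_nhdsGT hc₀.1).const_mul
    (16 * γ)).eventually_lt_const (by simp : 16 * γ * 0 < 1)).and (Ioo_mem_nhdsGT hab) |>.exists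
  obtain ⟨C, hC⟩ := (isCompact_closedBall z₀ 1).bddAbove_image
    (((differentiable_wr (f := Φ) (hdiff c hc)).continuous.norm.add
      (differentiable_wr (f := Θ) (hdiff c hc)).continuous.norm).continuousOn)
  have hC0 : 0 ≤ C := (by positivity : (0 : ℝ) ≤ ‖Wr Φ (u z₀) c‖ + ‖Wr Θ (u z₀) c‖).trans
    (hC ⟨z₀, mem_closedBall_self zero_le_one, rfl⟩)
  refine ⟨c, hc, γ * (4 * (2 * C)), fun z hz x hx => ?_⟩
  have hxab : x ∈ Ioo a b := ⟨hx.1, hx.2.trans hc.2⟩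
  have hbound := IsSol.wr_le_two_mul_wr hΦ hΘ hW hΦsq hΘsq (hu z) (husq z) hc
    (by nlinarith [hγ z hz, hρ0 c hc.1.le])
  calc ‖W z - Wr f (u z) x‖ ≤ ‖lam - z‖ * (4 * (2 * C) * ∫ t in a..x, ρ t) :=
        hf.norm_lim_sub_wr_le (hu z) hxab
          (hfsq.intervalIntegrable_pairing (husq z) hf.1 (hu z).1 hxab) (hWlim z) (hρ x hxab)
          fun t ht => norm_pairing_le_of_wr_eq_one (hW t ⟨ht.1, ht.2.trans_lt hxab.2⟩) (hfΦΘ t)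
            ((hbound t ⟨ht.1, ht.2.trans hx.2.le⟩).trans (by gcongr; exact hC ⟨z, hz, rfl⟩))
    _ ≤ γ * (4 * (2 * C) * ∫ t in a..x, ρ t) := by
        gcongr
        · exact mul_nonneg (by positivity) (hρ0 x hx.1.le)
        · exact hγ z hz
    _ = γ * (4 * (2 * C)) * ∫ t in a..x, ρ t := (mul_assoc _ _ _).symm

theorem differentiable_of_tendsto_wr (hab : a < b) (hΦ : IsSol a b Q11 Q12 Q12 Q22 lam Φ)
    (hΘ : IsSol a b Q11 Q12 Q12 Q22 lam Θ) (hW : ∀ x ∈ Ioo a b, Wr Θ Φ x = 1)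
    (hΦsq : SqIntNear a b Φ) (hΘsq : SqIntNear a b Θ)
    (hu : ∀ z, IsSol a b Q11 Q12 Q12 Q22 z (u z)) (husq : ∀ z, SqIntNear a b (u z))
    (hdiff : ∀ x ∈ Ioo a b,
      Differentiable ℂ (fun z => (u z x).1) ∧ Differentiable ℂ (fun z => (u z x).2))
    (hf : IsSol a b Q11 Q12 Q12 Q22 lam f) (hfsq : SqIntNear a b f)
    (hfΦΘ : ∀ t, ‖f t‖ ≤ ‖Φ t‖ + ‖Θ t‖) {W : ℂ → ℂ}
    (hWlim : ∀ z, Tendsto (Wr f (u z)) (𝓝[>] a) (𝓝 (W z))) : Differentiable ℂ W := by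
  have hloc : TendstoLocallyUniformly (fun x z => Wr f (u z) x) W (𝓝[>] a) := by
    rw [Metric.tendstoLocallyUniformly_iff]
    intro ε hε z₀
    obtain ⟨c, hc, C, hC⟩ := exists_norm_lim_sub_wr_le hab hΦ hΘ hW hΦsq hΘsq hu husq hdiff hf
      hfsq hfΦΘ hWlim z₀
    refine ⟨ball z₀ 1, ball_mem_nhds z₀ one_pos, ?_⟩
    filter_upwards [((((hΦsq c hc).add (hΘsq c hc)).tendsto_integral_nhdsGT hc.1).const_mul
      C).eventually_lt_const (by simpa using hε), Ioo_mem_nhdsGT hc.1] with x hxε hx z hz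
    rw [dist_eq_norm]
    exact (hC z (ball_subset_closedBall hz) x hx).trans_lt hxε
  refine differentiableOn_univ.1 (hloc.tendstoLocallyUniformlyOn.differentiableOn ?_ isOpen_univ)
  filter_upwards [Ioo_mem_nhdsGT hab] with x hx
  exact (differentiable_wr (hdiff x hx)).differentiableOn

end Holomorphy

theorem statement5_general
    (a b : ℝ) (hab : a < b) (m : ℝ)
    (qel qam qsc : ℝ → ℝ)
    (hLC : ∀ z : ℂ, ∀ u : ℝ → ℂ × ℂ, DiracSol a b m qel qam qsc z u →
      ∃ c ∈ Set.Ioo a b, SqIntOn (Set.Ioo a c) u)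
    (lam₀ : ℝ) (Φ₀ Θ₀ : ℝ → ℂ × ℂ)
    (hΦ₀ : DiracSol a b m qel qam qsc (lam₀ : ℂ) Φ₀)
    (hΘ₀ : DiracSol a b m qel qam qsc (lam₀ : ℂ) Θ₀)
    (hW₀ : ∀ x ∈ Set.Ioo a b, Wr Θ₀ Φ₀ x = 1) :
    (∀ z : ℂ, ∀ u : ℝ → ℂ × ℂ, DiracSol a b m qel qam qsc z u →
      (∃ L : ℂ, Filter.Tendsto (fun x => Wr Φ₀ u x) (nhdsWithin a (Set.Ioi a)) (nhds L)) ∧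
      (∃ L : ℂ, Filter.Tendsto (fun x => Wr Θ₀ u x) (nhdsWithin a (Set.Ioi a)) (nhds L))) ∧
    (∀ u : ℂ → ℝ → ℂ × ℂ,
      (∀ z, DiracSol a b m qel qam qsc z (u z)) →
      (∀ x ∈ Set.Ioo a b, Differentiable ℂ (fun z => (u z x).1) ∧
        Differentiable ℂ (fun z => (u z x).2)) →
      (∃ WΦ : ℂ → ℂ, Differentiable ℂ WΦ ∧
        ∀ z, Filter.Tendsto (fun x => Wr Φ₀ (u z) x) (nhdsWithin a (Set.Ioi a)) (nhds (WΦ z))) ∧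
      (∃ WΘ : ℂ → ℂ, Differentiable ℂ WΘ ∧
        ∀ z, Filter.Tendsto (fun x => Wr Θ₀ (u z) x) (nhdsWithin a (Set.Ioi a)) (nhds (WΘ z)))) := by
  have hsq : ∀ {z v}, DiracSol a b m qel qam qsc z v → SqIntNear a b v := fun hv => by
    obtain ⟨c, hc, h⟩ := hLC _ _ hv
    exact h.sqIntNear hc hv.1
  have hlim : ∀ {z f v}, DiracSol a b m qel qam qsc lam₀ f → DiracSol a b m qel qam qsc z v →
      ∃ L, Tendsto (Wr f v) (𝓝[>] a) (𝓝 L) :=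
    fun hf hv => IsSol.exists_tendsto_wr hab hf hv (hsq hf) (hsq hv)
  refine ⟨fun z u hu => ⟨hlim hΦ₀ hu, hlim hΘ₀ hu⟩, fun u hu hdiff => ?_⟩
  have hholo : ∀ {f}, DiracSol a b m qel qam qsc lam₀ f → (∀ t, ‖f t‖ ≤ ‖Φ₀ t‖ + ‖Θ₀ t‖) →
      ∃ W : ℂ → ℂ, Differentiable ℂ W ∧ ∀ z, Tendsto (Wr f (u z)) (𝓝[>] a) (𝓝 (W z)) :=
    fun hf hfΦΘ => have hWlim z := tendsto_nhds_limUnder (hlim hf (hu z))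
      ⟨_, differentiable_of_tendsto_wr hab hΦ₀ hΘ₀ hW₀ (hsq hΦ₀) (hsq hΘ₀) hu (fun z => hsq (hu z))
        hdiff hf (hsq hf) hfΦΘ hWlim, hWlim⟩
  exact ⟨hholo hΦ₀ fun t => le_add_of_nonneg_right (norm_nonneg _),
    hholo hΘ₀ fun t => le_add_of_nonneg_left (norm_nonneg _)⟩

/-- If `τ` is in the limit circle case at `a` (every solution of `τ u = z u`
is square integrable near `a`, for every `z`), then for real solutions `Φ₀, Θ₀` of
`τ u = λ₀ u` with `W(Θ₀,Φ₀) = 1` the limits `W_a(Φ₀,u)`, `W_a(Θ₀,u)` exist for every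
solution `u` of `τ u = z u`, and they depend holomorphically on `z` whenever the family
of solutions does. -/
theorem statement5
    (a b : ℝ) (hab : a < b) (m : ℝ) (hm : 0 ≤ m)
    (qel qam qsc : ℝ → ℝ)
    (hqel : LocInt a b qel) (hqam : LocInt a b qam) (hqsc : LocInt a b qsc)
    (hLC : ∀ z : ℂ, ∀ u : ℝ → ℂ × ℂ, DiracSol a b m qel qam qsc z u →
      ∃ c ∈ Set.Ioo a b, SqIntOn (Set.Ioo a c) u)
    (lam₀ : ℝ) (Φ₀ Θ₀ : ℝ → ℂ × ℂ)
    (hΦ₀ : DiracSol a b m qel qam qsc (lam₀ : ℂ) Φ₀)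
    (hΘ₀ : DiracSol a b m qel qam qsc (lam₀ : ℂ) Θ₀)
    (hΦ₀r : RealValued Φ₀) (hΘ₀r : RealValued Θ₀)
    (hW₀ : ∀ x ∈ Set.Ioo a b, Wr Θ₀ Φ₀ x = 1) :
    (∀ z : ℂ, ∀ u : ℝ → ℂ × ℂ, DiracSol a b m qel qam qsc z u →
      (∃ L : ℂ, Filter.Tendsto (fun x => Wr Φ₀ u x) (nhdsWithin a (Set.Ioi a)) (nhds L)) ∧
      (∃ L : ℂ, Filter.Tendsto (fun x => Wr Θ₀ u x) (nhdsWithin a (Set.Ioi a)) (nhds L))) ∧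
    (∀ u : ℂ → ℝ → ℂ × ℂ,
      (∀ z, DiracSol a b m qel qam qsc z (u z)) →
      (∀ x ∈ Set.Ioo a b, Differentiable ℂ (fun z => (u z x).1) ∧
        Differentiable ℂ (fun z => (u z x).2)) →
      (∃ WΦ : ℂ → ℂ, Differentiable ℂ WΦ ∧
        ∀ z, Filter.Tendsto (fun x => Wr Φ₀ (u z) x) (nhdsWithin a (Set.Ioi a)) (nhds (WΦ z))) ∧
      (∃ WΘ : ℂ → ℂ, Differentiable ℂ WΘ ∧
        ∀ z, Filter.Tendsto (fun x => Wr Θ₀ (u z) x) (nhdsWithin a (Set.Ioi a)) (nhds (WΘ z)))) :=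
  statement5_general a b hab m qel qam qsc hLC lam₀ Φ₀ Θ₀ hΦ₀ hΘ₀ hW₀
end
end

section
/- Assume Hypothesis (LC): for some λ₀ ∈ ℝ there are real-valued solutions Φ₀, Θ₀ of τu = λ₀u with W(Θ₀,Φ₀) = 1 such that W_a(Φ₀,u) = lim_{x→a} W_x(Φ₀,u) and W_a(Θ₀,u) = lim_{x→a} W_x(Θ₀,u) exist for every solution u of τu = zu and every z ∈ ℂ. Fix c ∈ I and let c(z,x), s(z,x) be the solutions of τu = zu with c(z,c) = (1,0)ᵀ and s(z,c) = (0,1)ᵀ, and define Φ(z,x) = W_a(c(z),Φ₀)s(z,x) − W_a(s(z),Φ₀)c(z,x) and Θ(z,x) = W_a(c(z),Θ₀)s(z,x) − W_a(s(z),Θ₀)c(z,x). Then W(Θ(z),Φ(z)) = 1 for all z ∈ ℂ, and for all z, ẑ ∈ ℂ one has W_a(Θ(z),Φ(ẑ)) = 1 and W_a(Φ(ẑ),Φ(z)) = W_a(Θ(ẑ),Θ(z)) = 0. -/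
open MeasureTheory Set Filter Topology Complex Asymptotics

noncomputable section

/-! Because the potential matrix is symmetric (`Q₁₂ = Q₂₁`), the Wronskian of two solutions of
`τu = zu` is absolutely continuous with derivative zero almost everywhere, hence constant; in
particular `W(c(z), s(z)) = 1`. Since `W(Θ₀, Φ₀) = 1`, the Plücker relation expands every Wronskian
as `W(f,g) = W(f,Θ₀) W(g,Φ₀) - W(g,Θ₀) W(f,Φ₀)`, so `W_a(f,g)` is determined by the boundary values
of `f` and `g` against `Θ₀, Φ₀`. For `f, g = c(z), s(z)` this shows that these boundary values form
a matrix of determinant one, and `Φ(z)`, `Θ(z)` are the combinations whose boundary values against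
`(Θ₀, Φ₀)` are `(-1, 0)` and `(0, 1)`; all the claims follow. -/

theorem AbsolutelyContinuousOnInterval.of_dist_le_s6 {X Y : Type*} [PseudoMetricSpace X]
    [PseudoMetricSpace Y] {f : ℝ → X} {g : ℝ → Y} {a b : ℝ}
    (hf : AbsolutelyContinuousOnInterval f a b)
    (h : ∀ s ∈ uIcc a b, ∀ t ∈ uIcc a b, dist (g s) (g t) ≤ dist (f s) (f t)) :
    AbsolutelyContinuousOnInterval g a b := by
  refine squeeze_zero' (.of_forall fun E => Finset.sum_nonneg fun _ _ => dist_nonneg) ?_ hf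
  refine eventually_inf_principal.2 (.of_forall fun E hE => Finset.sum_le_sum fun i hi => ?_)
  exact h _ (hE.1 i hi).1 _ (hE.1 i hi).2

section Primitive

variable {E : Type*} [NormedAddCommGroup E] [NormedSpace ℝ E]

theorem absolutelyContinuousOnInterval_of_eq_add_intervalIntegral {u f : ℝ → E} {x₀ x : ℝ}
    (hf : IntervalIntegrable f volume x₀ x)
    (hu : ∀ t ∈ uIcc x₀ x, u t = u x₀ + ∫ s in x₀..t, f s) :
    AbsolutelyContinuousOnInterval u x₀ x := by
  refine (hf.norm.absolutelyContinuousOnInterval_intervalIntegral left_mem_uIcc).of_dist_le_s6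
    fun s hs t ht => ?_
  rw [hu s hs, hu t ht, dist_add_left, dist_eq_norm, Real.dist_eq,
    intervalIntegral.integral_interval_sub_left (hf.mono_set (uIcc_subset_uIcc_left hs))
      (hf.mono_set (uIcc_subset_uIcc_left ht)),
    intervalIntegral.integral_interval_sub_left (hf.norm.mono_set (uIcc_subset_uIcc_left hs))
      (hf.norm.mono_set (uIcc_subset_uIcc_left ht))]
  exact intervalIntegral.norm_integral_le_abs_integral_norm

theorem ae_hasDerivAt_of_eq_add_intervalIntegral [CompleteSpace E] {u f : ℝ → E} {x₀ x : ℝ}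
    (hf : IntervalIntegrable f volume x₀ x)
    (hu : ∀ t ∈ uIcc x₀ x, u t = u x₀ + ∫ s in x₀..t, f s) :
    ∀ᵐ t, t ∈ uIcc x₀ x → HasDerivAt u (f t) t := by
  have hne (y : ℝ) : ∀ᵐ t, t ≠ y := by simp [ae_iff, measure_singleton]
  filter_upwards [hf.ae_hasDerivAt_integral, hne x₀, hne x] with t hderiv h₀ h₁ ht
  have hmem : uIcc x₀ x ∈ 𝓝 t := by
    rw [uIcc] at ht ⊢
    exact Icc_mem_nhds (by grind) (by grind)
  exact ((hderiv ht x₀ left_mem_uIcc).const_add (u x₀)).congr_of_eventuallyEq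
    (eventually_of_mem hmem hu)

end Primitive

section Wronskian

variable {a b : ℝ} {Q11 Q12 Q22 : ℝ → ℝ} {z : ℂ} {u v : ℝ → ℂ × ℂ}

theorem IsSol.wr_eq (hu : IsSol a b Q11 Q12 Q12 Q22 z u) (hv : IsSol a b Q11 Q12 Q12 Q22 z v)
    {x₀ x : ℝ} (hx₀ : x₀ ∈ Ioo a b) (hx : x ∈ Ioo a b) : Wr u v x = Wr u v x₀ := by
  have hsub : uIcc x₀ x ⊆ Ioo a b := ordConnected_Ioo.uIcc_subset hx₀ hx
  obtain ⟨hu₁i, hu₂i, -, -⟩ := hu.2 x₀ hx₀ x hx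
  obtain ⟨hv₁i, hv₂i, -, -⟩ := hv.2 x₀ hx₀ x hx
  have hu₁ := fun t ht => (hu.2 x₀ hx₀ t (hsub ht)).2.2.1
  have hu₂ := fun t ht => (hu.2 x₀ hx₀ t (hsub ht)).2.2.2
  have hv₁ := fun t ht => (hv.2 x₀ hx₀ t (hsub ht)).2.2.1
  have hv₂ := fun t ht => (hv.2 x₀ hx₀ t (hsub ht)).2.2.2
  have hac : AbsolutelyContinuousOnInterval (Wr u v) x₀ x :=
    ((absolutelyContinuousOnInterval_of_eq_add_intervalIntegral hu₁i hu₁).fun_smul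
        (absolutelyContinuousOnInterval_of_eq_add_intervalIntegral hv₂i hv₂)).fun_sub
      ((absolutelyContinuousOnInterval_of_eq_add_intervalIntegral hu₂i hu₂).fun_smul
        (absolutelyContinuousOnInterval_of_eq_add_intervalIntegral hv₁i hv₁))
  have hderiv : ∀ᵐ t, t ∈ uIcc x₀ x → HasDerivAt (Wr u v) 0 t := by
    filter_upwards [ae_hasDerivAt_of_eq_add_intervalIntegral hu₁i hu₁,
      ae_hasDerivAt_of_eq_add_intervalIntegral hu₂i hu₂,
      ae_hasDerivAt_of_eq_add_intervalIntegral hv₁i hv₁,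
      ae_hasDerivAt_of_eq_add_intervalIntegral hv₂i hv₂] with t h₁ h₂ h₃ h₄ ht
    refine (((h₁ ht).mul (h₄ ht)).sub ((h₂ ht).mul (h₃ ht))).congr_deriv ?_
    simp only [Prod.smul_fst, Prod.smul_snd, smul_eq_mul]
    ring
  obtain ⟨C, hC⟩ := hac.const_of_ae_hasDerivAt_zero hderiv
  rw [hC x right_mem_uIcc, hC x₀ left_mem_uIcc]

end Wronskian

section WronskianAlgebra

variable {f g s c w Φ₀ Θ₀ : ℝ → ℂ × ℂ}

theorem wr_sub_smul_left (α β : ℂ) (x : ℝ) :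
    Wr (fun y => α • s y - β • c y) w x = α * Wr s w x - β * Wr c w x := by
  simp only [Wr, Prod.fst_sub, Prod.snd_sub, Prod.smul_fst, Prod.smul_snd, smul_eq_mul]
  ring

theorem wr_sub_smul_sub_smul (α β γ δ : ℂ) (x : ℝ) :
    Wr (fun y => α • s y - β • c y) (fun y => γ • s y - δ • c y) x
      = (α * δ - β * γ) * Wr c s x := by
  simp only [Wr, Prod.fst_sub, Prod.snd_sub, Prod.smul_fst, Prod.smul_snd, smul_eq_mul]
  ring

theorem wr_eq_of_wr_eq_one {x : ℝ} (h : Wr Θ₀ Φ₀ x = 1) :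
    Wr f g x = Wr f Θ₀ x * Wr g Φ₀ x - Wr g Θ₀ x * Wr f Φ₀ x := by
  simp only [Wr] at h ⊢
  linear_combination (-(f x).1 * (g x).2 + (f x).2 * (g x).1) * h

variable {l : Filter ℝ}

theorem tendsto_wr_sub_smul_left {α β Ls Lc : ℂ} (hs : Tendsto (Wr s w) l (𝓝 Ls))
    (hc : Tendsto (Wr c w) l (𝓝 Lc)) :
    Tendsto (Wr (fun y => α • s y - β • c y) w) l (𝓝 (α * Ls - β * Lc)) := by
  simpa only [funext (wr_sub_smul_left α β)] using (hs.const_mul α).sub (hc.const_mul β)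

theorem tendsto_wr_of_wr_eq_one {αf βf αg βg : ℂ} (hW : ∀ᶠ x in l, Wr Θ₀ Φ₀ x = 1)
    (hfΘ : Tendsto (Wr f Θ₀) l (𝓝 αf)) (hgΦ : Tendsto (Wr g Φ₀) l (𝓝 βg))
    (hgΘ : Tendsto (Wr g Θ₀) l (𝓝 αg)) (hfΦ : Tendsto (Wr f Φ₀) l (𝓝 βf)) :
    Tendsto (Wr f g) l (𝓝 (αf * βg - αg * βf)) :=
  ((hfΘ.mul hgΦ).sub (hgΘ.mul hfΦ)).congr' (hW.mono fun _ hx => (wr_eq_of_wr_eq_one hx).symm)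

end WronskianAlgebra

theorem statement6_general
    (a b : ℝ) (hab : a < b) (m : ℝ)
    (qel qam qsc : ℝ → ℝ)
    -- Hypothesis (LC)
    (Φ₀ Θ₀ : ℝ → ℂ × ℂ)
    (hW₀ : ∀ x ∈ Set.Ioo a b, Wr Θ₀ Φ₀ x = 1)
    -- the fundamental system `c(z,x)`, `s(z,x)` normalized at the base point `c₀ ∈ I`
    (c₀ : ℝ) (hc₀ : c₀ ∈ Set.Ioo a b)
    (csol ssol : ℂ → ℝ → ℂ × ℂ)
    (hcsol : ∀ z, DiracSol a b m qel qam qsc z (csol z) ∧ csol z c₀ = (1, 0))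
    (hssol : ∀ z, DiracSol a b m qel qam qsc z (ssol z) ∧ ssol z c₀ = (0, 1))
    -- the limits `W_a(c(z),Φ₀)`, `W_a(s(z),Φ₀)`, `W_a(c(z),Θ₀)`, `W_a(s(z),Θ₀)`
    (WcΦ WsΦ WcΘ WsΘ : ℂ → ℂ)
    (hWcΦ : ∀ z, Filter.Tendsto (fun x => Wr (csol z) Φ₀ x) (nhdsWithin a (Set.Ioi a)) (nhds (WcΦ z)))
    (hWsΦ : ∀ z, Filter.Tendsto (fun x => Wr (ssol z) Φ₀ x) (nhdsWithin a (Set.Ioi a)) (nhds (WsΦ z)))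
    (hWcΘ : ∀ z, Filter.Tendsto (fun x => Wr (csol z) Θ₀ x) (nhdsWithin a (Set.Ioi a)) (nhds (WcΘ z)))
    (hWsΘ : ∀ z, Filter.Tendsto (fun x => Wr (ssol z) Θ₀ x) (nhdsWithin a (Set.Ioi a)) (nhds (WsΘ z)))
    -- the solutions `Φ(z,x)` and `Θ(z,x)`
    (Φ Θ : ℂ → ℝ → ℂ × ℂ)
    (hΦ : ∀ z x, Φ z x = WcΦ z • ssol z x - WsΦ z • csol z x)
    (hΘ : ∀ z x, Θ z x = WcΘ z • ssol z x - WsΘ z • csol z x) :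
    (∀ z : ℂ, ∀ x ∈ Set.Ioo a b, Wr (Θ z) (Φ z) x = 1) ∧
    (∀ z z' : ℂ,
      Filter.Tendsto (fun x => Wr (Θ z) (Φ z') x) (nhdsWithin a (Set.Ioi a)) (nhds 1) ∧
      Filter.Tendsto (fun x => Wr (Φ z') (Φ z) x) (nhdsWithin a (Set.Ioi a)) (nhds 0) ∧
      Filter.Tendsto (fun x => Wr (Θ z') (Θ z) x) (nhdsWithin a (Set.Ioi a)) (nhds 0)) := by
  have hΦz (z : ℂ) : Φ z = fun x => WcΦ z • ssol z x - WsΦ z • csol z x := funext (hΦ z)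
  have hΘz (z : ℂ) : Θ z = fun x => WcΘ z • ssol z x - WsΘ z • csol z x := funext (hΘ z)
  have hW₀a : ∀ᶠ x in 𝓝[>] a, Wr Θ₀ Φ₀ x = 1 :=
    eventually_of_mem (Ioo_mem_nhdsGT hab) hW₀
  have hcs (z : ℂ) : ∀ x ∈ Ioo a b, Wr (csol z) (ssol z) x = 1 := fun x hx => by
    rw [(hcsol z).1.wr_eq (hssol z).1 hc₀ hx]
    simp [Wr, (hcsol z).2, (hssol z).2]
  have hdet (z : ℂ) : WcΘ z * WsΦ z - WsΘ z * WcΦ z = 1 :=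
    tendsto_nhds_unique (tendsto_wr_of_wr_eq_one hW₀a (hWcΘ z) (hWsΦ z) (hWsΘ z) (hWcΦ z))
      (tendsto_const_nhds.congr'
        (eventually_of_mem (Ioo_mem_nhdsGT hab) fun x hx => (hcs z x hx).symm))
  have hΘΦ₀ (z : ℂ) : Tendsto (Wr (Θ z) Φ₀) (𝓝[>] a) (𝓝 1) := by
    simpa only [hΘz, hdet] using
      tendsto_wr_sub_smul_left (α := WcΘ z) (β := WsΘ z) (hWsΦ z) (hWcΦ z)
  have hΘΘ₀ (z : ℂ) : Tendsto (Wr (Θ z) Θ₀) (𝓝[>] a) (𝓝 0) := by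
    simpa only [hΘz, mul_comm, sub_self] using
      tendsto_wr_sub_smul_left (α := WcΘ z) (β := WsΘ z) (hWsΘ z) (hWcΘ z)
  have hΦΦ₀ (z : ℂ) : Tendsto (Wr (Φ z) Φ₀) (𝓝[>] a) (𝓝 0) := by
    simpa only [hΦz, mul_comm, sub_self] using
      tendsto_wr_sub_smul_left (α := WcΦ z) (β := WsΦ z) (hWsΦ z) (hWcΦ z)
  have hΦΘ₀ (z : ℂ) : Tendsto (Wr (Φ z) Θ₀) (𝓝[>] a) (𝓝 (-1)) := by
    rw [hΦz]
    convert tendsto_wr_sub_smul_left (α := WcΦ z) (β := WsΦ z) (hWsΘ z) (hWcΘ z) using 2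
    linear_combination hdet z
  refine ⟨fun z x hx => ?_, fun z z' => ⟨?_, ?_, ?_⟩⟩
  · rw [hΘz, hΦz, wr_sub_smul_sub_smul, hcs z x hx, mul_one, hdet]
  · simpa using
      tendsto_wr_of_wr_eq_one hW₀a (hΘΘ₀ z) (hΦΦ₀ z') (hΦΘ₀ z') (hΘΦ₀ z)
  · simpa using
      tendsto_wr_of_wr_eq_one hW₀a (hΦΘ₀ z') (hΦΦ₀ z) (hΦΘ₀ z) (hΦΦ₀ z')
  · simpa using
      tendsto_wr_of_wr_eq_one hW₀a (hΘΘ₀ z') (hΘΦ₀ z) (hΘΘ₀ z) (hΘΦ₀ z')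

/-- Under Hypothesis (LC) the solutions
`Φ(z,x) = W_a(c(z),Φ₀)s(z,x) - W_a(s(z),Φ₀)c(z,x)` and
`Θ(z,x) = W_a(c(z),Θ₀)s(z,x) - W_a(s(z),Θ₀)c(z,x)` satisfy `W(Θ(z),Φ(z)) = 1`, and
moreover `W_a(Θ(z),Φ(z')) = 1` and `W_a(Φ(z'),Φ(z)) = W_a(Θ(z'),Θ(z)) = 0`. -/
theorem statement6
    (a b : ℝ) (hab : a < b) (m : ℝ) (hm : 0 ≤ m)
    (qel qam qsc : ℝ → ℝ)
    (hqel : LocInt a b qel) (hqam : LocInt a b qam) (hqsc : LocInt a b qsc)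
    -- Hypothesis (LC)
    (lam₀ : ℝ) (Φ₀ Θ₀ : ℝ → ℂ × ℂ)
    (hΦ₀ : DiracSol a b m qel qam qsc (lam₀ : ℂ) Φ₀)
    (hΘ₀ : DiracSol a b m qel qam qsc (lam₀ : ℂ) Θ₀)
    (hΦ₀r : RealValued Φ₀) (hΘ₀r : RealValued Θ₀)
    (hW₀ : ∀ x ∈ Set.Ioo a b, Wr Θ₀ Φ₀ x = 1)
    (hyp : ∀ z : ℂ, ∀ u : ℝ → ℂ × ℂ, DiracSol a b m qel qam qsc z u →
      (∃ L : ℂ, Filter.Tendsto (fun x => Wr Φ₀ u x) (nhdsWithin a (Set.Ioi a)) (nhds L)) ∧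
      (∃ L : ℂ, Filter.Tendsto (fun x => Wr Θ₀ u x) (nhdsWithin a (Set.Ioi a)) (nhds L)))
    -- the fundamental system `c(z,x)`, `s(z,x)` normalized at the base point `c₀ ∈ I`
    (c₀ : ℝ) (hc₀ : c₀ ∈ Set.Ioo a b)
    (csol ssol : ℂ → ℝ → ℂ × ℂ)
    (hcsol : ∀ z, DiracSol a b m qel qam qsc z (csol z) ∧ csol z c₀ = (1, 0))
    (hssol : ∀ z, DiracSol a b m qel qam qsc z (ssol z) ∧ ssol z c₀ = (0, 1))
    -- the limits `W_a(c(z),Φ₀)`, `W_a(s(z),Φ₀)`, `W_a(c(z),Θ₀)`, `W_a(s(z),Θ₀)`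
    (WcΦ WsΦ WcΘ WsΘ : ℂ → ℂ)
    (hWcΦ : ∀ z, Filter.Tendsto (fun x => Wr (csol z) Φ₀ x) (nhdsWithin a (Set.Ioi a)) (nhds (WcΦ z)))
    (hWsΦ : ∀ z, Filter.Tendsto (fun x => Wr (ssol z) Φ₀ x) (nhdsWithin a (Set.Ioi a)) (nhds (WsΦ z)))
    (hWcΘ : ∀ z, Filter.Tendsto (fun x => Wr (csol z) Θ₀ x) (nhdsWithin a (Set.Ioi a)) (nhds (WcΘ z)))
    (hWsΘ : ∀ z, Filter.Tendsto (fun x => Wr (ssol z) Θ₀ x) (nhdsWithin a (Set.Ioi a)) (nhds (WsΘ z)))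
    -- the solutions `Φ(z,x)` and `Θ(z,x)`
    (Φ Θ : ℂ → ℝ → ℂ × ℂ)
    (hΦ : ∀ z x, Φ z x = WcΦ z • ssol z x - WsΦ z • csol z x)
    (hΘ : ∀ z x, Θ z x = WcΘ z • ssol z x - WsΘ z • csol z x) :
    (∀ z : ℂ, ∀ x ∈ Set.Ioo a b, Wr (Θ z) (Φ z) x = 1) ∧
    (∀ z z' : ℂ,
      Filter.Tendsto (fun x => Wr (Θ z) (Φ z') x) (nhdsWithin a (Set.Ioi a)) (nhds 1) ∧
      Filter.Tendsto (fun x => Wr (Φ z') (Φ z) x) (nhdsWithin a (Set.Ioi a)) (nhds 0) ∧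
      Filter.Tendsto (fun x => Wr (Θ z') (Θ z) x) (nhdsWithin a (Set.Ioi a)) (nhds 0)) :=
  statement6_general a b hab m qel qam qsc Φ₀ Θ₀ hW₀ c₀ hc₀ csol ssol hcsol hssol WcΦ WsΦ WcΘ WsΘ
    hWcΦ hWsΦ hWcΘ hWsΘ Φ Θ hΦ hΘ
end
end
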